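/- arXiv:1811.09293 — 5 statements merged into one kernel-verified Lean document; each statement's English description precedes it below -/
import Mathlib

section
/- In the algebra T over ℂ(q) generated by X, Y, Z with relations YX − q⁻¹XY = (q−q⁻¹)Z, XZ − q⁻¹ZX = −q⁻³(q−q⁻¹)Y, and ZY − q⁻¹YZ = −q⁻³(q−q⁻¹)X, the element L := q⁵XZY + q³Y² − q⁴Z² + q³X² − (q−q⁻¹) is central, i.e. LX = XL, LY = YL, and LZ = ZL. -/
set_option maxHeartbeats 4000000


/-- In any algebra over a field `k` containing elements `X, Y, Z` satisfying the
defining relations of the punctured-torus invariant algebra `T`, the element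
`L := q⁵XZY + q³Y² − q⁴Z² + q³X² − (q−q⁻¹)` commutes with `X`, `Y` and `Z`
(hence is central in `T`). -/
theorem stmt_0 {k : Type*} [Field k] (q : k) (hq : q ≠ 0)
    {A : Type*} [Ring A] [Algebra k A] (X Y Z : A)
    (h1 : Y * X - q⁻¹ • (X * Y) = (q - q⁻¹) • Z)
    (h2 : X * Z - q⁻¹ • (Z * X) = (-(q⁻¹ ^ 3 * (q - q⁻¹))) • Y)
    (h3 : Z * Y - q⁻¹ • (Y * Z) = (-(q⁻¹ ^ 3 * (q - q⁻¹))) • X) :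
    let L : A := q ^ 5 • (X * Z * Y) + q ^ 3 • (Y * Y) - q ^ 4 • (Z * Z)
      + q ^ 3 • (X * X) - algebraMap k A (q - q⁻¹)
    L * X = X * L ∧ L * Y = Y * L ∧ L * Z = Z * L := by
  intro L
  have r1 : Y * X = q⁻¹ • (X * Y) + (q - q⁻¹) • Z := by
    rw [sub_eq_iff_eq_add] at h1; rw [h1, add_comm]
  have r3 : Z * Y = q⁻¹ • (Y * Z) + (-(q⁻¹ ^ 3 * (q - q⁻¹))) • X := by
    rw [sub_eq_iff_eq_add] at h3; rw [h3, add_comm]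
  have r2 : Z * X = q • (X * Z) + (q⁻¹ ^ 2 * (q - q⁻¹)) • Y := by
    linear_combination (norm := match_scalars <;> field_simp <;> ring) (-q : k) • h2
  have r1w : ∀ w : A, Y * (X * w) = q⁻¹ • (X * (Y * w)) + (q - q⁻¹) • (Z * w) := by
    intro w
    rw [← mul_assoc, r1, add_mul, smul_mul_assoc, smul_mul_assoc, mul_assoc]
  have r2w : ∀ w : A, Z * (X * w) = q • (X * (Z * w)) + (q⁻¹ ^ 2 * (q - q⁻¹)) • (Y * w) := by
    intro w
    rw [← mul_assoc, r2, add_mul, smul_mul_assoc, smul_mul_assoc, mul_assoc]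
  have r3w : ∀ w : A, Z * (Y * w) = q⁻¹ • (Y * (Z * w)) + (-(q⁻¹ ^ 3 * (q - q⁻¹))) • (X * w) := by
    intro w
    rw [← mul_assoc, r3, add_mul, smul_mul_assoc, smul_mul_assoc, mul_assoc]
  have halg : algebraMap k A (q - q⁻¹) = (q - q⁻¹) • (1 : A) :=
    Algebra.algebraMap_eq_smul_one _
  refine ⟨?_, ?_, ?_⟩ <;>
  · show L * _ = _ * L
    simp only [L, halg, sub_mul, mul_sub, add_mul, mul_add, smul_mul_assoc,
      mul_smul_comm, one_mul, mul_one, mul_assoc, smul_add, smul_sub, smul_smul,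
      r1, r2, r3, r1w, r2w, r3w]
    match_scalars
    all_goals try field_simp
    all_goals try ring
    all_goals try (simp only [← zpow_natCast, inv_zpow, ← zpow_neg, ← zpow_add₀ hq]; push_cast [← zpow_natCast]; norm_num)
    all_goals try ring
end

section
/- The algebra T is spanned as a vector space by the ordered monomials X^α Y^β Z^γ with α, β, γ ∈ ℕ; that is, every element of T is a k-linear combination of such monomials. -/
/-! Order the generators `X < Y < Z`. Each relation rewrites an out-of-order product of two
generators as a multiple of the ordered product plus a combination of words of length `≤ 1`. Applied at an
adjacent descent of a word, it produces the same word with one inversion fewer plus strictly shorter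
words, so induction on (length, number of inversions) puts every word in the generators into the
span of the sorted words `X^α Y^β Z^γ`. These words span `T` because the generators generate it. -/

open FreeAlgebra

/-- The defining relations of the punctured-torus invariant algebra `T`:
generators `0 = X`, `1 = Y`, `2 = Z`, relations
`YX = q⁻¹XY + (q−q⁻¹)Z`, `ZX = qXZ + q⁻²(q−q⁻¹)Y`, `ZY = q⁻¹YZ − q⁻³(q−q⁻¹)X`
(equivalently the relations in the statement, rearranged). -/
inductive TRel (k : Type) [Field k] (q : k) :
    FreeAlgebra k (Fin 3) → FreeAlgebra k (Fin 3) → Prop where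
  | rel1 : TRel k q (ι k 1 * ι k 0)
      (q⁻¹ • (ι k 0 * ι k 1) + (q - q⁻¹) • ι k 2)
  | rel2 : TRel k q (ι k 0 * ι k 2)
      (q⁻¹ • (ι k 2 * ι k 0) + (-(q⁻¹ ^ 3 * (q - q⁻¹))) • ι k 1)
  | rel3 : TRel k q (ι k 2 * ι k 1)
      (q⁻¹ • (ι k 1 * ι k 2) + (-(q⁻¹ ^ 3 * (q - q⁻¹))) • ι k 0)

open Submodule

namespace List

variable {ι : Type*} [LinearOrder ι]

def inversionCount : List ι → ℕ
  | [] => 0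
  | a :: t => t.countP (· < a) + inversionCount t

theorem inversionCount_lt_of_swap (u : List ι) {a b : ι} (hab : a < b) (v : List ι) :
    inversionCount (u ++ a :: b :: v) < inversionCount (u ++ b :: a :: v) := by
  induction u with
  | nil =>
    simp only [nil_append, inversionCount, countP_cons, decide_eq_true_eq,
      if_neg (not_lt.2 hab.le), if_pos hab]
    omega
  | cons c u ih =>
    have hcount : (u ++ a :: b :: v).countP (· < c) = (u ++ b :: a :: v).countP (· < c) := by
      simp only [countP_append, countP_cons]
      omega
    simp only [cons_append, inversionCount, hcount]
    omega

theorem exists_eq_append_cons_cons_of_not_sortedLE {w : List ι} (hw : ¬ w.SortedLE) :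
    ∃ (u : List ι) (a b : ι) (v : List ι), w = u ++ b :: a :: v ∧ a < b := by
  rw [sortedLE_iff_isChain] at hw
  induction w with
  | nil => exact absurd isChain_nil hw
  | cons x t ih =>
    cases t with
    | nil => exact absurd (isChain_singleton x) hw
    | cons y t =>
      rw [isChain_cons_cons] at hw
      by_cases hxy : x ≤ y
      · obtain ⟨u, a, b, v, heq, hab⟩ := ih fun h => hw ⟨hxy, h⟩
        exact ⟨x :: u, a, b, v, by simp [heq], hab⟩
      · exact ⟨[], y, x, t, rfl, not_le.1 hxy⟩

end List

section Straightening

variable (k : Type*) {ι A : Type*} [CommSemiring k] [Semiring A] [Algebra k A]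

def wordSpan (g : ι → A) (n : ℕ) : Submodule k A :=
  span k {x | ∃ w : List ι, w.length ≤ n ∧ (w.map g).prod = x}

def sortedWordSpan [LinearOrder ι] (g : ι → A) : Submodule k A :=
  span k {x | ∃ w : List ι, w.SortedLE ∧ (w.map g).prod = x}

def HasStraightening [LinearOrder ι] (g : ι → A) : Prop :=
  ∀ i j, i < j → ∃ c : k, ∃ r ∈ wordSpan k g 1, g j * g i = c • (g i * g j) + r

variable {k} {g : ι → A}

theorem prod_mem_wordSpan (w : List ι) : (w.map g).prod ∈ wordSpan k g w.length :=
  subset_span ⟨w, le_rfl, rfl⟩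

theorem wordSpan_mul_le (m n : ℕ) : wordSpan k g m * wordSpan k g n ≤ wordSpan k g (m + n) := by
  rw [wordSpan, wordSpan, span_mul_span]
  refine span_mono ?_
  rintro _ ⟨_, ⟨u, hu, rfl⟩, _, ⟨v, hv, rfl⟩, rfl⟩
  exact ⟨u ++ v, by simp only [List.length_append]; omega, by simp⟩

variable [LinearOrder ι]

theorem prod_mem_sortedWordSpan (hg : HasStraightening k g) (w : List ι) :
    (w.map g).prod ∈ sortedWordSpan k g := by
  by_cases hw : w.SortedLE
  · exact subset_span ⟨w, hw, rfl⟩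
  obtain ⟨u, a, b, v, rfl, hab⟩ := List.exists_eq_append_cons_cons_of_not_sortedLE hw
  obtain ⟨c, r, hr, hba⟩ := hg a b hab
  have hswapped := prod_mem_sortedWordSpan hg (u ++ a :: b :: v)
  have hshorter : wordSpan k g (u.length + 1 + v.length) ≤ sortedWordSpan k g := by
    refine span_le.2 ?_
    rintro _ ⟨w', hw', rfl⟩
    exact prod_mem_sortedWordSpan hg w'
  have hrest : (u.map g).prod * r * (v.map g).prod ∈ wordSpan k g (u.length + 1 + v.length) :=
    wordSpan_mul_le _ _ <| mul_mem_mul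
      (wordSpan_mul_le _ _ <| mul_mem_mul (prod_mem_wordSpan u) hr) (prod_mem_wordSpan v)
  have hexpand : ((u ++ b :: a :: v).map g).prod
      = c • ((u ++ a :: b :: v).map g).prod + (u.map g).prod * r * (v.map g).prod :=
    calc ((u ++ b :: a :: v).map g).prod = (u.map g).prod * (g b * g a) * (v.map g).prod := by
          simp [mul_assoc]
      _ = _ := by
          rw [hba, mul_add, add_mul, mul_smul_comm, smul_mul_assoc]
          simp [mul_assoc]
  rw [hexpand]
  exact add_mem (smul_mem _ c hswapped) (hshorter hrest)
termination_by (w.length, w.inversionCount)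
decreasing_by
  all_goals subst_vars
  · exact Prod.lex_def.2 (.inr ⟨by simp, List.inversionCount_lt_of_swap u hab v⟩)
  · exact Prod.Lex.left _ _ (by simp only [List.length_append, List.length_cons]; omega)

theorem sortedWordSpan_eq_top (hg : HasStraightening k g)
    (hgen : Algebra.adjoin k (Set.range g) = ⊤) : sortedWordSpan k g = ⊤ := by
  refine eq_top_iff.2 fun x _ => ?_
  have hx : x ∈ Subalgebra.toSubmodule (Algebra.adjoin k (Set.range g)) := by
    rw [hgen]
    trivial
  rw [Algebra.adjoin_eq_span, ← FreeMonoid.mrange_lift] at hx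
  refine span_le.2 ?_ hx
  rintro _ ⟨w, rfl⟩
  simpa [FreeMonoid.lift_apply] using prod_mem_sortedWordSpan hg w.toList

end Straightening

theorem List.eq_replicate_count_of_sortedLE {w : List (Fin 3)} (hw : w.SortedLE) :
    w = replicate (w.count 0) 0 ++ replicate (w.count 1) 1 ++ replicate (w.count 2) 2 := by
  refine List.Perm.eq_of_sortedLE hw ?_ (List.perm_iff_count.2 fun x => ?_)
  · simp [List.sortedLE_iff_pairwise, List.pairwise_append]
  · fin_cases x <;> simp [List.count_replicate]

namespace TRel

variable {k : Type} [Field k] {q : k}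

abbrev gen (k : Type) [Field k] (q : k) (i : Fin 3) : RingQuot (TRel k q) :=
  RingQuot.mkAlgHom k (TRel k q) (ι k i)

theorem adjoin_range_gen : Algebra.adjoin k (Set.range (gen k q)) = ⊤ := by
  rw [show gen k q = RingQuot.mkAlgHom k (TRel k q) ∘ ι k from rfl, Set.range_comp,
    Algebra.adjoin_image, FreeAlgebra.adjoin_range_ι, Algebra.map_top,
    AlgHom.range_eq_top]
  exact RingQuot.mkAlgHom_surjective k (TRel k q)

theorem gen_one_mul_gen_zero :
    gen k q 1 * gen k q 0 = q⁻¹ • (gen k q 0 * gen k q 1) + (q - q⁻¹) • gen k q 2 := by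
  simpa only [map_mul, map_add, map_smul] using RingQuot.mkAlgHom_rel k (rel1 (k := k) (q := q))

theorem gen_zero_mul_gen_two : gen k q 0 * gen k q 2 =
    q⁻¹ • (gen k q 2 * gen k q 0) + (-(q⁻¹ ^ 3 * (q - q⁻¹))) • gen k q 1 := by
  simpa only [map_mul, map_add, map_smul] using RingQuot.mkAlgHom_rel k (rel2 (k := k) (q := q))

theorem gen_two_mul_gen_one : gen k q 2 * gen k q 1 =
    q⁻¹ • (gen k q 1 * gen k q 2) + (-(q⁻¹ ^ 3 * (q - q⁻¹))) • gen k q 0 := by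
  simpa only [map_mul, map_add, map_smul] using RingQuot.mkAlgHom_rel k (rel3 (k := k) (q := q))

theorem gen_two_mul_gen_zero (hq : q ≠ 0) : gen k q 2 * gen k q 0 =
    q • (gen k q 0 * gen k q 2) + (q⁻¹ ^ 2 * (q - q⁻¹)) • gen k q 1 := by
  have hcoeff : q * -(q⁻¹ ^ 3 * (q - q⁻¹)) + q⁻¹ ^ 2 * (q - q⁻¹) = 0 := by
    field_simp
    ring
  rw [gen_zero_mul_gen_two, smul_add, smul_smul, smul_smul, mul_inv_cancel₀ hq, one_smul,
    add_assoc, ← add_smul, hcoeff, zero_smul, add_zero]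

theorem hasStraightening_gen (hq : q ≠ 0) : HasStraightening k (gen k q) := by
  intro i j hij
  have hgen (c : k) (e : Fin 3) : c • gen k q e ∈ wordSpan k (gen k q) 1 :=
    smul_mem _ c (subset_span ⟨[e], by simp, by simp⟩)
  fin_cases i <;> fin_cases j <;> simp only [Fin.mk_lt_mk] at hij <;> try omega
  · exact ⟨_, _, hgen _ 2, gen_one_mul_gen_zero⟩
  · exact ⟨_, _, hgen _ 1, gen_two_mul_gen_zero hq⟩
  · exact ⟨_, _, hgen _ 0, gen_two_mul_gen_one⟩

end TRel

theorem stmt_1_general (k : Type) [Field k] (q : k) (hq : q ≠ 0)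
    (x : RingQuot (TRel k q)) :
    x ∈ Submodule.span k
      { w : RingQuot (TRel k q) | ∃ α β γ : ℕ,
        w = RingQuot.mkAlgHom k (TRel k q) (ι k 0) ^ α *
            RingQuot.mkAlgHom k (TRel k q) (ι k 1) ^ β *
            RingQuot.mkAlgHom k (TRel k q) (ι k 2) ^ γ } := by
  have hx : x ∈ sortedWordSpan k (TRel.gen k q) := by
    rw [sortedWordSpan_eq_top (TRel.hasStraightening_gen hq) TRel.adjoin_range_gen]
    trivial
  refine span_le.2 ?_ hx
  rintro _ ⟨w, hw, rfl⟩
  refine subset_span ⟨w.count 0, w.count 1, w.count 2, ?_⟩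
  conv_lhs => rw [List.eq_replicate_count_of_sortedLE hw]
  simp only [List.map_append, List.map_replicate, List.prod_append, List.prod_replicate]

/-- The algebra `T` is spanned as a `k`-vector space by the ordered monomials
`X^α Y^β Z^γ`. -/
theorem stmt_1 (k : Type) [Field k] (q : k) (hq : q ≠ 0) (hq2 : q ^ 2 ≠ 1)
    (x : RingQuot (TRel k q)) :
    x ∈ Submodule.span k
      { w : RingQuot (TRel k q) | ∃ α β γ : ℕ,
        w = RingQuot.mkAlgHom k (TRel k q) (ι k 0) ^ α *
            RingQuot.mkAlgHom k (TRel k q) (ι k 1) ^ β *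
            RingQuot.mkAlgHom k (TRel k q) (ι k 2) ^ γ } :=
  stmt_1_general k q hq x
end

section
/- In the reflection equation algebra O_q(SL₂), the quantum Cayley–Hamilton identity A² = tr_q(A)·A − q⁻²·1 holds entrywise, i.e.: (a¹₁)² + a¹₂a²₁ = (a¹₁ + q⁻²a²₂)a¹₁ − q⁻²; a¹₁a¹₂ + a¹₂a²₂ = (a¹₁ + q⁻²a²₂)a¹₂; a²₁a¹₁ + a²₂a²₁ = (a¹₁ + q⁻²a²₂)a²₁; and a²₁a¹₂ + (a²₂)² = (a¹₁ + q⁻²a²₂)a²₂ − q⁻². -/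
namespace QuantumSL2

variable {k : Type*} [Field k] {A : Type*} [Ring A] [Algebra k A] {q : k} {a11 a12 a21 a22 : A}

theorem smul_smul_inv_sq_cancel (hq : q ≠ 0) (x : A) : q⁻¹ ^ 2 • q ^ 2 • x = x := by
  rw [smul_smul, ← mul_pow, inv_mul_cancel₀ hq, one_pow, one_smul]

theorem mul_eq_inv_sq_smul_of_qdet (hq : q ≠ 0) (r7 : a11 * a22 = 1 + q ^ 2 • (a12 * a21)) :
    a12 * a21 = q⁻¹ ^ 2 • (a11 * a22 - 1) := by
  rw [r7, add_sub_cancel_left, smul_smul_inv_sq_cancel hq]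

theorem cayleyHamilton_entry11 (hq : q ≠ 0) (r4 : a22 * a11 = a11 * a22)
    (r7 : a11 * a22 = 1 + q ^ 2 • (a12 * a21)) :
    a11 * a11 + a12 * a21 = (a11 + q⁻¹ ^ 2 • a22) * a11 - q⁻¹ ^ 2 • (1 : A) := by
  rw [add_mul, smul_mul_assoc, r4, mul_eq_inv_sq_smul_of_qdet hq r7]
  module

theorem cayleyHamilton_entry12 (hq : q ≠ 0) (r5 : a22 * a12 = q ^ 2 • (a12 * a22)) :
    a11 * a12 + a12 * a22 = (a11 + q⁻¹ ^ 2 • a22) * a12 := by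
  rw [add_mul, smul_mul_assoc, r5, smul_smul_inv_sq_cancel hq]

theorem cayleyHamilton_entry21
    (r2 : a21 * a11 = a11 * a21 - (q⁻¹ ^ 2 * (1 - q⁻¹ ^ 2)) • (a21 * a22))
    (r6 : a22 * a21 = q⁻¹ ^ 2 • (a21 * a22)) :
    a21 * a11 + a22 * a21 = (a11 + q⁻¹ ^ 2 • a22) * a21 := by
  rw [add_mul, smul_mul_assoc, r6, r2]
  module

theorem cayleyHamilton_entry22 (hq : q ≠ 0)
    (r3 : a21 * a12 = a12 * a21 + (1 - q⁻¹ ^ 2) • (a11 * a22 - a22 * a22))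
    (r7 : a11 * a22 = 1 + q ^ 2 • (a12 * a21)) :
    a21 * a12 + a22 * a22 = (a11 + q⁻¹ ^ 2 • a22) * a22 - q⁻¹ ^ 2 • (1 : A) := by
  rw [add_mul, smul_mul_assoc, r3, mul_eq_inv_sq_smul_of_qdet hq r7]
  module

end QuantumSL2

theorem stmt_11_general {k : Type*} [Field k] (q : k) (hq : q ≠ 0)
    {A : Type*} [Ring A] [Algebra k A] (a11 a12 a21 a22 : A)
    (r2 : a21 * a11 = a11 * a21 - (q⁻¹ ^ 2 * (1 - q⁻¹ ^ 2)) • (a21 * a22))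
    (r3 : a21 * a12 = a12 * a21 + (1 - q⁻¹ ^ 2) • (a11 * a22 - a22 * a22))
    (r4 : a22 * a11 = a11 * a22)
    (r5 : a22 * a12 = q ^ 2 • (a12 * a22))
    (r6 : a22 * a21 = q⁻¹ ^ 2 • (a21 * a22))
    (r7 : a11 * a22 = 1 + q ^ 2 • (a12 * a21)) :
    a11 * a11 + a12 * a21 = (a11 + q⁻¹ ^ 2 • a22) * a11 - q⁻¹ ^ 2 • (1 : A) ∧
    a11 * a12 + a12 * a22 = (a11 + q⁻¹ ^ 2 • a22) * a12 ∧
    a21 * a11 + a22 * a21 = (a11 + q⁻¹ ^ 2 • a22) * a21 ∧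
    a21 * a12 + a22 * a22 = (a11 + q⁻¹ ^ 2 • a22) * a22 - q⁻¹ ^ 2 • (1 : A) :=
  ⟨QuantumSL2.cayleyHamilton_entry11 hq r4 r7, QuantumSL2.cayleyHamilton_entry12 hq r5,
    QuantumSL2.cayleyHamilton_entry21 r2 r6, QuantumSL2.cayleyHamilton_entry22 hq r3 r7⟩

/-- Quantum Cayley–Hamilton identity `A² = tr_q(A)·A − q⁻²·1` holds entrywise in
the reflection equation algebra `O_q(SL₂)`. -/
theorem stmt_11 {k : Type*} [Field k] (q : k) (hq : q ≠ 0)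
    {A : Type*} [Ring A] [Algebra k A] (a11 a12 a21 a22 : A)
    (r1 : a12 * a11 = a11 * a12 + (1 - q⁻¹ ^ 2) • (a12 * a22))
    (r2 : a21 * a11 = a11 * a21 - (q⁻¹ ^ 2 * (1 - q⁻¹ ^ 2)) • (a21 * a22))
    (r3 : a21 * a12 = a12 * a21 + (1 - q⁻¹ ^ 2) • (a11 * a22 - a22 * a22))
    (r4 : a22 * a11 = a11 * a22)
    (r5 : a22 * a12 = q ^ 2 • (a12 * a22))
    (r6 : a22 * a21 = q⁻¹ ^ 2 • (a21 * a22))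
    (r7 : a11 * a22 = 1 + q ^ 2 • (a12 * a21)) :
    a11 * a11 + a12 * a21 = (a11 + q⁻¹ ^ 2 • a22) * a11 - q⁻¹ ^ 2 • (1 : A) ∧
    a11 * a12 + a12 * a22 = (a11 + q⁻¹ ^ 2 • a22) * a12 ∧
    a21 * a11 + a22 * a21 = (a11 + q⁻¹ ^ 2 • a22) * a21 ∧
    a21 * a12 + a22 * a22 = (a11 + q⁻¹ ^ 2 • a22) * a22 - q⁻¹ ^ 2 • (1 : A) :=
  stmt_11_general q hq a11 a12 a21 a22 r2 r3 r4 r5 r6 r7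
end

section
/- Let R be an algebra with elements x₁, x₂, x₃ satisfying q·x_i x_{i+1} − q⁻¹·x_{i+1} x_i = (q²−q⁻²)·x_{i+2} for all i (indices mod 3). Then the element Ω := q²x₁² + q⁻²x₂² + q²x₃² − q·x₁x₂x₃ commutes with each of x₁, x₂, x₃. -/
/-- The Casimir `Ω := q²x₁² + q⁻²x₂² + q²x₃² − q·x₁x₂x₃` commutes with each
generator of the skein algebra of the punctured torus. -/
theorem stmt_16 {k : Type*} [Field k] (q : k) (hq : q ≠ 0)
    {A : Type*} [Ring A] [Algebra k A] (x1 x2 x3 : A)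
    (h1 : q • (x1 * x2) - q⁻¹ • (x2 * x1) = (q ^ 2 - q⁻¹ ^ 2) • x3)
    (h2 : q • (x2 * x3) - q⁻¹ • (x3 * x2) = (q ^ 2 - q⁻¹ ^ 2) • x1)
    (h3 : q • (x3 * x1) - q⁻¹ • (x1 * x3) = (q ^ 2 - q⁻¹ ^ 2) • x2) :
    let Ω : A := q ^ 2 • (x1 * x1) + q⁻¹ ^ 2 • (x2 * x2) + q ^ 2 • (x3 * x3)
      - q • (x1 * x2 * x3)
    Ω * x1 = x1 * Ω ∧ Ω * x2 = x2 * Ω ∧ Ω * x3 = x3 * Ω := by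
  intro Ω
  set E : A := q ^ 2 • (x1 * x1) + q⁻¹ ^ 2 • (x2 * x2) + q ^ 2 • (x3 * x3)
      - q • (x1 * x2 * x3) with hE
  have d1 : q • (x1 * x2) - q⁻¹ • (x2 * x1) - (q ^ 2 - q⁻¹ ^ 2) • x3 = 0 :=
    sub_eq_zero_of_eq h1
  have d2 : q • (x2 * x3) - q⁻¹ • (x3 * x2) - (q ^ 2 - q⁻¹ ^ 2) • x1 = 0 :=
    sub_eq_zero_of_eq h2
  have d3 : q • (x3 * x1) - q⁻¹ • (x1 * x3) - (q ^ 2 - q⁻¹ ^ 2) • x2 = 0 :=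
    sub_eq_zero_of_eq h3
  refine ⟨?_, ?_, ?_⟩
  · have key : E * x1 - x1 * E =
        q • (x3 * (q • (x3 * x1) - q⁻¹ • (x1 * x3) - (q ^ 2 - q⁻¹ ^ 2) • x2))
        + q⁻¹ • ((q • (x3 * x1) - q⁻¹ • (x1 * x3) - (q ^ 2 - q⁻¹ ^ 2) • x2) * x3)
        + x1 * (q • (x1 * x2) - q⁻¹ • (x2 * x1) - (q ^ 2 - q⁻¹ ^ 2) • x3) * x3
        - q⁻¹ • (x2 * (q • (x1 * x2) - q⁻¹ • (x2 * x1) - (q ^ 2 - q⁻¹ ^ 2) • x3))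
        - q • ((q • (x1 * x2) - q⁻¹ • (x2 * x1) - (q ^ 2 - q⁻¹ ^ 2) • x3) * x2)
        - x1 * x2 * (q • (x3 * x1) - q⁻¹ • (x1 * x3) - (q ^ 2 - q⁻¹ ^ 2) • x2) := by
      rw [hE]
      simp only [smul_sub, smul_add, mul_add, add_mul, mul_sub, sub_mul,
        smul_mul_assoc, mul_smul_comm, smul_smul, mul_assoc]
      match_scalars <;> field_simp <;> ring
    rw [d1, d3] at key
    simp only [mul_zero, zero_mul, smul_zero, add_zero, sub_zero, zero_sub,
      zero_add, sub_self, neg_zero] at key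
    exact sub_eq_zero.mp key
  · have key : E * x2 - x2 * E =
        q ^ 3 • ((q • (x1 * x2) - q⁻¹ • (x2 * x1) - (q ^ 2 - q⁻¹ ^ 2) • x3) * x1)
        + q • (x1 * (q • (x1 * x2) - q⁻¹ • (x2 * x1) - (q ^ 2 - q⁻¹ ^ 2) • x3))
        + q ^ 2 • (x1 * x2 * (q • (x2 * x3) - q⁻¹ • (x3 * x2) - (q ^ 2 - q⁻¹ ^ 2) • x1))
        - q ^ 3 • (x3 * (q • (x2 * x3) - q⁻¹ • (x3 * x2) - (q ^ 2 - q⁻¹ ^ 2) • x1))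
        - q • ((q • (x2 * x3) - q⁻¹ • (x3 * x2) - (q ^ 2 - q⁻¹ ^ 2) • x1) * x3)
        - q ^ 2 • ((q • (x1 * x2) - q⁻¹ • (x2 * x1) - (q ^ 2 - q⁻¹ ^ 2) • x3) * x2 * x3) := by
      rw [hE]
      simp only [smul_sub, smul_add, mul_add, add_mul, mul_sub, sub_mul,
        smul_mul_assoc, mul_smul_comm, smul_smul, mul_assoc]
      match_scalars <;> field_simp <;> ring
    rw [d1, d2] at key
    simp only [mul_zero, zero_mul, smul_zero, add_zero, sub_zero, zero_sub,
      zero_add, sub_self, neg_zero] at key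
    exact sub_eq_zero.mp key
  · have key : E * x3 - x3 * E =
        q⁻¹ • ((q • (x2 * x3) - q⁻¹ • (x3 * x2) - (q ^ 2 - q⁻¹ ^ 2) • x1) * x2)
        + q • (x2 * (q • (x2 * x3) - q⁻¹ • (x3 * x2) - (q ^ 2 - q⁻¹ ^ 2) • x1))
        + (q • (x3 * x1) - q⁻¹ • (x1 * x3) - (q ^ 2 - q⁻¹ ^ 2) • x2) * (x2 * x3)
        - q • ((q • (x3 * x1) - q⁻¹ • (x1 * x3) - (q ^ 2 - q⁻¹ ^ 2) • x2) * x1)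
        - q⁻¹ • (x1 * (q • (x3 * x1) - q⁻¹ • (x1 * x3) - (q ^ 2 - q⁻¹ ^ 2) • x2))
        - x1 * (q • (x2 * x3) - q⁻¹ • (x3 * x2) - (q ^ 2 - q⁻¹ ^ 2) • x1) * x3 := by
      rw [hE]
      simp only [smul_sub, smul_add, mul_add, add_mul, mul_sub, sub_mul,
        smul_mul_assoc, mul_smul_comm, smul_smul, mul_assoc]
      match_scalars <;> field_simp <;> ring
    rw [d2, d3] at key
    simp only [mul_zero, zero_mul, smul_zero, add_zero, sub_zero, zero_sub,
      zero_add, sub_self, neg_zero] at key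
    exact sub_eq_zero.mp key
end

section
/- The algebra B is spanned as a module over the central polynomial subalgebra generated by s, t, u, v by the monomials E^m F^n G^l with m, n, l ∈ ℕ such that at least one of m, n, l is zero; that is, every element of B is a linear combination, with coefficients that are polynomials in s, t, u, v, of such monomials. -/
/-!
Filter `B` by total degree in `E, F, G`, with `s, t, u, v` in degree zero. Each commutation
relation rewrites a product of two of `E, F, G` in the wrong order as a scalar multiple of the
ordered product plus terms of lower degree, so multiplying an ordered monomial
`s^a t^b u^c v^d E^m F^n G^l` by a generator on either side stays within one degree more; hence
these monomials span `B`. The cubic relation puts `EFG` in degree two, and rewriting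
`FG = q⁻² GF + …` propagates this to `E F^(n+1) G` in degree `n + 2`. So an ordered monomial
with `m, n, l` all positive lies in a lower degree, and induction on the degree leaves only the
monomials with some exponent zero.
-/

open FreeAlgebra

/-- The defining relations of the invariant algebra `B` of the four-punctured
sphere: generators `0 = E`, `1 = F`, `2 = G`, `3 = s`, `4 = t`, `5 = u`, `6 = v`;
`s, t, u, v` are central. -/
inductive BRel (k : Type) [Field k] (q : k) :
    FreeAlgebra k (Fin 7) → FreeAlgebra k (Fin 7) → Prop where
  | relFE : BRel k q (ι k 1 * ι k 0)
      (q ^ 2 • (ι k 0 * ι k 1) + (q ^ 2 - q⁻¹ ^ 2) • ι k 2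
        + (1 - q ^ 2) • (ι k 3 * ι k 6 + ι k 4 * ι k 5))
  | relGE : BRel k q (ι k 2 * ι k 0)
      (q⁻¹ ^ 2 • (ι k 0 * ι k 2) - (q⁻¹ ^ 2 * (q ^ 2 - q⁻¹ ^ 2)) • ι k 1
        + (1 - q⁻¹ ^ 2) • (ι k 3 * ι k 5 + ι k 4 * ι k 6))
  | relGF : BRel k q (ι k 2 * ι k 1)
      (q ^ 2 • (ι k 1 * ι k 2) + (q ^ 2 - q⁻¹ ^ 2) • ι k 0
        + (1 - q ^ 2) • (ι k 3 * ι k 4 + ι k 5 * ι k 6))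
  | relEFG : BRel k q (ι k 0 * ι k 1 * ι k 2)
      (-(ι k 0 * ι k 0) - q⁻¹ ^ 4 • (ι k 1 * ι k 1) - ι k 2 * ι k 2
        - q⁻¹ ^ 4 • (ι k 3 * ι k 3 + ι k 4 * ι k 4 + ι k 5 * ι k 5 + ι k 6 * ι k 6)
        + (ι k 3 * ι k 4 + ι k 5 * ι k 6) * ι k 0
        + q⁻¹ ^ 2 • ((ι k 3 * ι k 5 + ι k 4 * ι k 6) * ι k 1)
        + (ι k 3 * ι k 6 + ι k 4 * ι k 5) * ι k 2
        - ι k 3 * ι k 4 * ι k 5 * ι k 6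
        + algebraMap k (FreeAlgebra k (Fin 7)) (q⁻¹ ^ 6 * (q ^ 2 + 1) ^ 2))
  | central : ∀ i j : Fin 7, 3 ≤ j → BRel k q (ι k j * ι k i) (ι k i * ι k j)

namespace BRel

variable (k : Type) [Field k] (q : k)

noncomputable def gen (i : Fin 7) : RingQuot (BRel k q) :=
  RingQuot.mkAlgHom k (BRel k q) (ι k i)

local notation "𝐄" => gen k q 0
local notation "𝐅" => gen k q 1
local notation "𝐆" => gen k q 2

theorem gen_commute {j : Fin 7} (hj : 3 ≤ j) (x : RingQuot (BRel k q)) :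
    Commute (gen k q j) x := by
  obtain ⟨y, rfl⟩ := RingQuot.mkAlgHom_surjective k (BRel k q) x
  induction y with
  | grade0 r => rw [AlgHom.commutes]; exact (Algebra.commutes r _).symm
  | grade1 i =>
    have h := RingQuot.mkAlgHom_rel k (central (q := q) i j hj)
    rw [map_mul, map_mul] at h
    exact h
  | mul a b ha hb => rw [map_mul]; exact ha.mul_right hb
  | add a b ha hb => rw [map_add]; exact ha.add_right hb

theorem rel_FE : 𝐅 * 𝐄 = q ^ 2 • (𝐄 * 𝐅) + (q ^ 2 - q⁻¹ ^ 2) • 𝐆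
    + (1 - q ^ 2) • (gen k q 3 * gen k q 6 + gen k q 4 * gen k q 5) := by
  simpa only [map_mul, map_add, map_smul, gen] using
    RingQuot.mkAlgHom_rel k (relFE (k := k) (q := q))

theorem rel_GE : 𝐆 * 𝐄 = q⁻¹ ^ 2 • (𝐄 * 𝐆) - (q⁻¹ ^ 2 * (q ^ 2 - q⁻¹ ^ 2)) • 𝐅
    + (1 - q⁻¹ ^ 2) • (gen k q 3 * gen k q 5 + gen k q 4 * gen k q 6) := by
  simpa only [map_mul, map_add, map_sub, map_smul, gen] using
    RingQuot.mkAlgHom_rel k (relGE (k := k) (q := q))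

theorem rel_GF : 𝐆 * 𝐅 = q ^ 2 • (𝐅 * 𝐆) + (q ^ 2 - q⁻¹ ^ 2) • 𝐄
    + (1 - q ^ 2) • (gen k q 3 * gen k q 4 + gen k q 5 * gen k q 6) := by
  simpa only [map_mul, map_add, map_smul, gen] using
    RingQuot.mkAlgHom_rel k (relGF (k := k) (q := q))

theorem rel_FG (hq : q ≠ 0) :
    𝐅 * 𝐆 = q⁻¹ ^ 2 • (𝐆 * 𝐅) - (q⁻¹ ^ 2 * (q ^ 2 - q⁻¹ ^ 2)) • 𝐄
      - (q⁻¹ ^ 2 * (1 - q ^ 2)) • (gen k q 3 * gen k q 4 + gen k q 5 * gen k q 6) := by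
  rw [rel_GF]
  match_scalars <;> field_simp <;> ring

theorem rel_EFG : 𝐄 * 𝐅 * 𝐆 =
    -(𝐄 * 𝐄) - q⁻¹ ^ 4 • (𝐅 * 𝐅) - 𝐆 * 𝐆
      - q⁻¹ ^ 4 • (gen k q 3 * gen k q 3 + gen k q 4 * gen k q 4 + gen k q 5 * gen k q 5
        + gen k q 6 * gen k q 6)
      + (gen k q 3 * gen k q 4 + gen k q 5 * gen k q 6) * 𝐄
      + q⁻¹ ^ 2 • ((gen k q 3 * gen k q 5 + gen k q 4 * gen k q 6) * 𝐅)
      + (gen k q 3 * gen k q 6 + gen k q 4 * gen k q 5) * 𝐆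
      - gen k q 3 * gen k q 4 * gen k q 5 * gen k q 6
      + algebraMap k (RingQuot (BRel k q)) (q⁻¹ ^ 6 * (q ^ 2 + 1) ^ 2) := by
  simpa only [map_mul, map_add, map_sub, map_neg, map_smul, AlgHom.commutes, gen] using
    RingQuot.mkAlgHom_rel k (relEFG (k := k) (q := q))

noncomputable def centralMonomial (a b c d : ℕ) : RingQuot (BRel k q) :=
  gen k q 3 ^ a * gen k q 4 ^ b * gen k q 5 ^ c * gen k q 6 ^ d

noncomputable def orderedMonomial (m n l : ℕ) : RingQuot (BRel k q) :=
  𝐄 ^ m * 𝐅 ^ n * 𝐆 ^ l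

def filtration (d : ℕ) : Submodule k (RingQuot (BRel k q)) :=
  Submodule.span k {x | ∃ a b c d' m n l, m + n + l ≤ d ∧
    x = centralMonomial k q a b c d' * orderedMonomial k q m n l}

theorem gen_mul_centralMonomial {j : Fin 7} (hj : 3 ≤ j) (a b c d : ℕ) :
    ∃ a' b' c' d', gen k q j * centralMonomial k q a b c d = centralMonomial k q a' b' c' d' := by
  have h i (hi : 3 ≤ i) (x y : RingQuot (BRel k q)) :
      gen k q i * (x * y) = x * (gen k q i * y) :=
    (gen_commute k q hi x).left_comm y
  simp only [centralMonomial, mul_assoc]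
  obtain rfl | rfl | rfl | rfl : j = 3 ∨ j = 4 ∨ j = 5 ∨ j = 6 := by revert j; decide
  · exact ⟨a + 1, b, c, d, by simp only [pow_succ', mul_assoc]⟩
  · exact ⟨a, b + 1, c, d, by simp only [pow_succ', mul_assoc, h 4 (by decide) (gen k q 3 ^ a)]⟩
  · exact ⟨a, b, c + 1, d, by
      simp only [pow_succ', mul_assoc, h 5 (by decide) (gen k q 3 ^ a),
        h 5 (by decide) (gen k q 4 ^ b)]⟩
  · exact ⟨a, b, c, d + 1, by
      simp only [pow_succ', h 6 (by decide) (gen k q 3 ^ a),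
        h 6 (by decide) (gen k q 4 ^ b), h 6 (by decide) (gen k q 5 ^ c)]⟩

theorem centralMonomial_commute (a b c d : ℕ) (x : RingQuot (BRel k q)) :
    Commute (centralMonomial k q a b c d) x :=
  ((((gen_commute k q (by decide) x).pow_left a).mul_left
    ((gen_commute k q (by decide) x).pow_left b)).mul_left
    ((gen_commute k q (by decide) x).pow_left c)).mul_left
    ((gen_commute k q (by decide) x).pow_left d)

variable {k q}

theorem filtration_mono {d e : ℕ} (h : d ≤ e) : filtration k q d ≤ filtration k q e :=
  Submodule.span_mono fun _ ⟨a, b, c, d', m, n, l, hd, hx⟩ =>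
    ⟨a, b, c, d', m, n, l, hd.trans h, hx⟩

theorem centralMonomial_mul_mem_filtration (a b c d' : ℕ) {d m n l : ℕ} (h : m + n + l ≤ d) :
    centralMonomial k q a b c d' * orderedMonomial k q m n l ∈ filtration k q d :=
  Submodule.subset_span ⟨a, b, c, d', m, n, l, h, rfl⟩

theorem orderedMonomial_mem_filtration {d m n l : ℕ} (h : m + n + l ≤ d) :
    orderedMonomial k q m n l ∈ filtration k q d := by
  simpa [centralMonomial] using centralMonomial_mul_mem_filtration (k := k) (q := q) 0 0 0 0 h

theorem one_mem_filtration (d : ℕ) : (1 : RingQuot (BRel k q)) ∈ filtration k q d := by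
  simpa [orderedMonomial] using
    orderedMonomial_mem_filtration (k := k) (q := q) (m := 0) (n := 0) (l := 0) d.zero_le

theorem gen_mul_mem_filtration_of_three_le {j : Fin 7} (hj : 3 ≤ j) {d : ℕ}
    {x : RingQuot (BRel k q)} (hx : x ∈ filtration k q d) : gen k q j * x ∈ filtration k q d := by
  induction hx using Submodule.span_induction with
  | mem y hy =>
    obtain ⟨a, b, c, d', m, n, l, hd, rfl⟩ := hy
    obtain ⟨a', b', c', d'', h⟩ := gen_mul_centralMonomial k q hj a b c d'
    rw [← mul_assoc, h]
    exact centralMonomial_mul_mem_filtration a' b' c' d'' hd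
  | zero => rw [mul_zero]; exact zero_mem _
  | add x y _ _ hx hy => rw [mul_add]; exact add_mem hx hy
  | smul r x _ hx => rw [mul_smul_comm]; exact Submodule.smul_mem _ r hx

theorem mul_gen_mem_filtration_of_three_le {j : Fin 7} (hj : 3 ≤ j) {d : ℕ}
    {x : RingQuot (BRel k q)} (hx : x ∈ filtration k q d) : x * gen k q j ∈ filtration k q d :=
  (gen_commute k q hj x).eq ▸ gen_mul_mem_filtration_of_three_le hj hx

theorem centralMonomial_mul_mem {d : ℕ} {x : RingQuot (BRel k q)} (hx : x ∈ filtration k q d)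
    (a b c d' : ℕ) : centralMonomial k q a b c d' * x ∈ filtration k q d := by
  have pow_mul_mem {j : Fin 7} (hj : 3 ≤ j) (a : ℕ) {y : RingQuot (BRel k q)}
      (hy : y ∈ filtration k q d) : gen k q j ^ a * y ∈ filtration k q d := by
    induction a with
    | zero => simpa using hy
    | succ a ih => rw [pow_succ', mul_assoc]; exact gen_mul_mem_filtration_of_three_le hj ih
  simp only [centralMonomial, mul_assoc]
  exact pow_mul_mem (by decide) a <| pow_mul_mem (by decide) b <| pow_mul_mem (by decide) c <|
    pow_mul_mem (by decide) d' hx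

theorem mul_mem_filtration_of_mul_orderedMonomial {c : RingQuot (BRel k q)} {d e : ℕ}
    (h : ∀ m n l, m + n + l ≤ d → c * orderedMonomial k q m n l ∈ filtration k q e)
    {x : RingQuot (BRel k q)} (hx : x ∈ filtration k q d) : c * x ∈ filtration k q e := by
  induction hx using Submodule.span_induction with
  | mem y hy =>
    obtain ⟨a, b, c', d', m, n, l, hd, rfl⟩ := hy
    rw [← mul_assoc, (centralMonomial_commute k q a b c' d' c).eq.symm, mul_assoc]
    exact centralMonomial_mul_mem (h m n l hd) a b c' d'
  | zero => rw [mul_zero]; exact zero_mem _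
  | add x y _ _ hx hy => rw [mul_add]; exact add_mem hx hy
  | smul r x _ hx => rw [mul_smul_comm]; exact Submodule.smul_mem _ r hx

theorem mul_mem_filtration_of_orderedMonomial_mul {c : RingQuot (BRel k q)} {d e : ℕ}
    (h : ∀ m n l, m + n + l ≤ d → orderedMonomial k q m n l * c ∈ filtration k q e)
    {x : RingQuot (BRel k q)} (hx : x ∈ filtration k q d) : x * c ∈ filtration k q e := by
  induction hx using Submodule.span_induction with
  | mem y hy =>
    obtain ⟨a, b, c', d', m, n, l, hd, rfl⟩ := hy
    rw [mul_assoc]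
    exact centralMonomial_mul_mem (h m n l hd) a b c' d'
  | zero => rw [zero_mul]; exact zero_mem _
  | add x y _ _ hx hy => rw [add_mul]; exact add_mem hx hy
  | smul r x _ hx => rw [smul_mul_assoc]; exact Submodule.smul_mem _ r hx

theorem E_mul_orderedMonomial (m n l : ℕ) :
    𝐄 * orderedMonomial k q m n l = orderedMonomial k q (m + 1) n l := by
  simp only [orderedMonomial, pow_succ', mul_assoc]

theorem F_mul_orderedMonomial_zero (n l : ℕ) :
    𝐅 * orderedMonomial k q 0 n l = orderedMonomial k q 0 (n + 1) l := by
  simp only [orderedMonomial, pow_zero, one_mul, pow_succ', mul_assoc]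

theorem G_mul_orderedMonomial_zero_zero (l : ℕ) :
    𝐆 * orderedMonomial k q 0 0 l = orderedMonomial k q 0 0 (l + 1) := by
  simp only [orderedMonomial, pow_zero, one_mul, pow_succ']

theorem orderedMonomial_mul_G (m n l : ℕ) :
    orderedMonomial k q m n l * 𝐆 = orderedMonomial k q m n (l + 1) := by
  simp only [orderedMonomial, pow_succ, mul_assoc]

theorem orderedMonomial_zero_mul_F (m n : ℕ) :
    orderedMonomial k q m n 0 * 𝐅 = orderedMonomial k q m (n + 1) 0 := by
  simp only [orderedMonomial, pow_zero, mul_one, pow_succ, mul_assoc]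

theorem orderedMonomial_zero_zero_mul_E (m : ℕ) :
    orderedMonomial k q m 0 0 * 𝐄 = orderedMonomial k q (m + 1) 0 0 := by
  simp only [orderedMonomial, pow_zero, mul_one, pow_succ]

theorem gen_mul_gen_mul_orderedMonomial_mem {i j : Fin 7} (hi : 3 ≤ i) (hj : 3 ≤ j)
    {d m n l : ℕ} (h : m + n + l ≤ d) :
    gen k q i * (gen k q j * orderedMonomial k q m n l) ∈ filtration k q d :=
  gen_mul_mem_filtration_of_three_le hi <| gen_mul_mem_filtration_of_three_le hj <|
    orderedMonomial_mem_filtration h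

theorem orderedMonomial_mul_gen_mul_gen_mem {i j : Fin 7} (hi : 3 ≤ i) (hj : 3 ≤ j)
    {d m n l : ℕ} (h : m + n + l ≤ d) :
    orderedMonomial k q m n l * gen k q i * gen k q j ∈ filtration k q d :=
  mul_gen_mem_filtration_of_three_le hj <| mul_gen_mem_filtration_of_three_le hi <|
    orderedMonomial_mem_filtration h

theorem E_mul_mem_filtration {d : ℕ} {x : RingQuot (BRel k q)} (hx : x ∈ filtration k q d) :
    𝐄 * x ∈ filtration k q (d + 1) :=
  mul_mem_filtration_of_mul_orderedMonomial (fun m n l h => by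
    rw [E_mul_orderedMonomial]; exact orderedMonomial_mem_filtration (by omega)) hx

theorem mul_G_mem_filtration {d : ℕ} {x : RingQuot (BRel k q)} (hx : x ∈ filtration k q d) :
    x * 𝐆 ∈ filtration k q (d + 1) :=
  mul_mem_filtration_of_orderedMonomial_mul (fun m n l h => by
    rw [orderedMonomial_mul_G]; exact orderedMonomial_mem_filtration (by omega)) hx

theorem F_mul_mem_filtration_of_lt {d : ℕ}
    (ihF : ∀ d' < d, ∀ x ∈ filtration k q d', 𝐅 * x ∈ filtration k q (d' + 1))
    (ihG : ∀ d' < d, ∀ x ∈ filtration k q d', 𝐆 * x ∈ filtration k q (d' + 1))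
    {x : RingQuot (BRel k q)} (hx : x ∈ filtration k q d) : 𝐅 * x ∈ filtration k q (d + 1) := by
  refine mul_mem_filtration_of_mul_orderedMonomial (fun m n l h => ?_) hx
  cases m with
  | zero => rw [F_mul_orderedMonomial_zero]; exact orderedMonomial_mem_filtration (by omega)
  | succ m =>
    have hw := orderedMonomial_mem_filtration (k := k) (q := q) (le_refl (m + n + l))
    rw [← E_mul_orderedMonomial, ← mul_assoc, rel_FE]
    simp only [add_mul, smul_mul_assoc, mul_assoc]
    refine add_mem (add_mem (Submodule.smul_mem _ _ ?_) (Submodule.smul_mem _ _ ?_))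
      (Submodule.smul_mem _ _ (add_mem
        (gen_mul_gen_mul_orderedMonomial_mem (by decide) (by decide) (by omega))
        (gen_mul_gen_mul_orderedMonomial_mem (by decide) (by decide) (by omega))))
    · exact filtration_mono (by omega) (E_mul_mem_filtration (ihF _ (by omega) _ hw))
    · exact filtration_mono (by omega) (ihG _ (by omega) _ hw)

theorem G_mul_mem_filtration_of_lt {d : ℕ}
    (ihF : ∀ d' < d, ∀ x ∈ filtration k q d', 𝐅 * x ∈ filtration k q (d' + 1))
    (ihG : ∀ d' < d, ∀ x ∈ filtration k q d', 𝐆 * x ∈ filtration k q (d' + 1))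
    (hF : ∀ x ∈ filtration k q d, 𝐅 * x ∈ filtration k q (d + 1))
    {x : RingQuot (BRel k q)} (hx : x ∈ filtration k q d) : 𝐆 * x ∈ filtration k q (d + 1) := by
  refine mul_mem_filtration_of_mul_orderedMonomial (fun m n l h => ?_) hx
  match m, n with
  | m + 1, n =>
    have hw := orderedMonomial_mem_filtration (k := k) (q := q) (le_refl (m + n + l))
    rw [← E_mul_orderedMonomial, ← mul_assoc, rel_GE]
    simp only [add_mul, sub_mul, smul_mul_assoc, mul_assoc]
    refine add_mem (sub_mem (Submodule.smul_mem _ _ ?_) (Submodule.smul_mem _ _ ?_))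
      (Submodule.smul_mem _ _ (add_mem
        (gen_mul_gen_mul_orderedMonomial_mem (by decide) (by decide) (by omega))
        (gen_mul_gen_mul_orderedMonomial_mem (by decide) (by decide) (by omega))))
    · exact filtration_mono (by omega) (E_mul_mem_filtration (ihG _ (by omega) _ hw))
    · exact filtration_mono (by omega) (ihF _ (by omega) _ hw)
  | 0, 0 => rw [G_mul_orderedMonomial_zero_zero]; exact orderedMonomial_mem_filtration (by omega)
  | 0, n + 1 =>
    have hw := orderedMonomial_mem_filtration (k := k) (q := q) (le_refl (0 + n + l))
    rw [← F_mul_orderedMonomial_zero, ← mul_assoc, rel_GF]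
    simp only [add_mul, smul_mul_assoc, mul_assoc]
    refine add_mem (add_mem (Submodule.smul_mem _ _ ?_) (Submodule.smul_mem _ _ ?_))
      (Submodule.smul_mem _ _ (add_mem
        (gen_mul_gen_mul_orderedMonomial_mem (by decide) (by decide) (by omega))
        (gen_mul_gen_mul_orderedMonomial_mem (by decide) (by decide) (by omega))))
    · exact hF _ (filtration_mono (by omega) (ihG _ (by omega) _ hw))
    · rw [E_mul_orderedMonomial]; exact orderedMonomial_mem_filtration (by omega)

theorem F_mul_mem_filtration_and_G_mul_mem_filtration (d : ℕ) :
    (∀ x ∈ filtration k q d, 𝐅 * x ∈ filtration k q (d + 1)) ∧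
      ∀ x ∈ filtration k q d, 𝐆 * x ∈ filtration k q (d + 1) := by
  induction d using Nat.strong_induction_on with
  | _ d ih =>
    have hF : ∀ x ∈ filtration k q d, 𝐅 * x ∈ filtration k q (d + 1) := fun _ =>
      F_mul_mem_filtration_of_lt (fun d' h => (ih d' h).1) (fun d' h => (ih d' h).2)
    exact ⟨hF, fun _ => G_mul_mem_filtration_of_lt (fun d' h => (ih d' h).1)
      (fun d' h => (ih d' h).2) hF⟩

theorem mul_F_mem_filtration_of_lt {d : ℕ}
    (ihF : ∀ d' < d, ∀ x ∈ filtration k q d', x * 𝐅 ∈ filtration k q (d' + 1))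
    (ihE : ∀ d' < d, ∀ x ∈ filtration k q d', x * 𝐄 ∈ filtration k q (d' + 1))
    {x : RingQuot (BRel k q)} (hx : x ∈ filtration k q d) : x * 𝐅 ∈ filtration k q (d + 1) := by
  refine mul_mem_filtration_of_orderedMonomial_mul (fun m n l h => ?_) hx
  cases l with
  | zero => rw [orderedMonomial_zero_mul_F]; exact orderedMonomial_mem_filtration (by omega)
  | succ l =>
    have hw := orderedMonomial_mem_filtration (k := k) (q := q) (le_refl (m + n + l))
    rw [← orderedMonomial_mul_G, mul_assoc, rel_GF]
    simp only [mul_add, mul_smul_comm, ← mul_assoc]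
    refine add_mem (add_mem (Submodule.smul_mem _ _ ?_) (Submodule.smul_mem _ _ ?_))
      (Submodule.smul_mem _ _ (add_mem
        (orderedMonomial_mul_gen_mul_gen_mem (by decide) (by decide) (by omega))
        (orderedMonomial_mul_gen_mul_gen_mem (by decide) (by decide) (by omega))))
    · exact filtration_mono (by omega) (mul_G_mem_filtration (ihF _ (by omega) _ hw))
    · exact filtration_mono (by omega) (ihE _ (by omega) _ hw)

theorem mul_E_mem_filtration_of_lt {d : ℕ}
    (ihF : ∀ d' < d, ∀ x ∈ filtration k q d', x * 𝐅 ∈ filtration k q (d' + 1))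
    (ihE : ∀ d' < d, ∀ x ∈ filtration k q d', x * 𝐄 ∈ filtration k q (d' + 1))
    (hF : ∀ x ∈ filtration k q d, x * 𝐅 ∈ filtration k q (d + 1))
    {x : RingQuot (BRel k q)} (hx : x ∈ filtration k q d) : x * 𝐄 ∈ filtration k q (d + 1) := by
  refine mul_mem_filtration_of_orderedMonomial_mul (fun m n l h => ?_) hx
  match n, l with
  | n, l + 1 =>
    have hw := orderedMonomial_mem_filtration (k := k) (q := q) (le_refl (m + n + l))
    rw [← orderedMonomial_mul_G, mul_assoc, rel_GE]
    simp only [mul_add, mul_sub, mul_smul_comm, ← mul_assoc]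
    refine add_mem (sub_mem (Submodule.smul_mem _ _ ?_) (Submodule.smul_mem _ _ ?_))
      (Submodule.smul_mem _ _ (add_mem
        (orderedMonomial_mul_gen_mul_gen_mem (by decide) (by decide) (by omega))
        (orderedMonomial_mul_gen_mul_gen_mem (by decide) (by decide) (by omega))))
    · exact filtration_mono (by omega) (mul_G_mem_filtration (ihE _ (by omega) _ hw))
    · exact filtration_mono (by omega) (ihF _ (by omega) _ hw)
  | 0, 0 => rw [orderedMonomial_zero_zero_mul_E]; exact orderedMonomial_mem_filtration (by omega)
  | n + 1, 0 =>
    have hw := orderedMonomial_mem_filtration (k := k) (q := q) (le_refl (m + n + 0))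
    rw [← orderedMonomial_zero_mul_F, mul_assoc, rel_FE]
    simp only [mul_add, mul_smul_comm, ← mul_assoc]
    refine add_mem (add_mem (Submodule.smul_mem _ _ ?_) (Submodule.smul_mem _ _ ?_))
      (Submodule.smul_mem _ _ (add_mem
        (orderedMonomial_mul_gen_mul_gen_mem (by decide) (by decide) (by omega))
        (orderedMonomial_mul_gen_mul_gen_mem (by decide) (by decide) (by omega))))
    · exact hF _ (filtration_mono (by omega) (ihE _ (by omega) _ hw))
    · rw [orderedMonomial_mul_G]; exact orderedMonomial_mem_filtration (by omega)

theorem mul_F_mem_filtration_and_mul_E_mem_filtration (d : ℕ) :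
    (∀ x ∈ filtration k q d, x * 𝐅 ∈ filtration k q (d + 1)) ∧
      ∀ x ∈ filtration k q d, x * 𝐄 ∈ filtration k q (d + 1) := by
  induction d using Nat.strong_induction_on with
  | _ d ih =>
    have hF : ∀ x ∈ filtration k q d, x * 𝐅 ∈ filtration k q (d + 1) := fun _ =>
      mul_F_mem_filtration_of_lt (fun d' h => (ih d' h).1) (fun d' h => (ih d' h).2)
    exact ⟨hF, fun _ => mul_E_mem_filtration_of_lt (fun d' h => (ih d' h).1)
      (fun d' h => (ih d' h).2) hF⟩

theorem gen_mul_mem_filtration (i : Fin 7) {d : ℕ} {x : RingQuot (BRel k q)}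
    (hx : x ∈ filtration k q d) : gen k q i * x ∈ filtration k q (d + 1) := by
  fin_cases i
  · exact E_mul_mem_filtration hx
  · exact (F_mul_mem_filtration_and_G_mul_mem_filtration d).1 x hx
  · exact (F_mul_mem_filtration_and_G_mul_mem_filtration d).2 x hx
  all_goals exact filtration_mono d.le_succ (gen_mul_mem_filtration_of_three_le (by decide) hx)

theorem mul_gen_mem_filtration (i : Fin 7) {d : ℕ} {x : RingQuot (BRel k q)}
    (hx : x ∈ filtration k q d) : x * gen k q i ∈ filtration k q (d + 1) := by
  fin_cases i
  · exact (mul_F_mem_filtration_and_mul_E_mem_filtration d).2 x hx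
  · exact (mul_F_mem_filtration_and_mul_E_mem_filtration d).1 x hx
  · exact mul_G_mem_filtration hx
  all_goals exact filtration_mono d.le_succ (mul_gen_mem_filtration_of_three_le (by decide) hx)

theorem exists_mul_mem_filtration (y : FreeAlgebra k (Fin 7)) : ∃ e, ∀ d, ∀ z ∈ filtration k q d,
    RingQuot.mkAlgHom k (BRel k q) y * z ∈ filtration k q (d + e) := by
  induction y with
  | grade0 r =>
    refine ⟨0, fun d z hz => ?_⟩
    rw [AlgHom.commutes, ← Algebra.smul_def]
    exact Submodule.smul_mem _ r hz
  | grade1 i => exact ⟨1, fun d z hz => gen_mul_mem_filtration i hz⟩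
  | mul a b ha hb =>
    obtain ⟨ea, ha⟩ := ha
    obtain ⟨eb, hb⟩ := hb
    refine ⟨eb + ea, fun d z hz => ?_⟩
    rw [map_mul, mul_assoc, ← add_assoc]
    exact ha _ _ (hb d z hz)
  | add a b ha hb =>
    obtain ⟨ea, ha⟩ := ha
    obtain ⟨eb, hb⟩ := hb
    refine ⟨max ea eb, fun d z hz => ?_⟩
    rw [map_add, add_mul]
    exact add_mem (filtration_mono (by omega) (ha d z hz)) (filtration_mono (by omega) (hb d z hz))

theorem exists_mem_filtration (x : RingQuot (BRel k q)) : ∃ d, x ∈ filtration k q d := by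
  obtain ⟨y, rfl⟩ := RingQuot.mkAlgHom_surjective k (BRel k q) x
  obtain ⟨e, he⟩ := exists_mul_mem_filtration (q := q) y
  exact ⟨0 + e, by simpa using he 0 1 (one_mem_filtration 0)⟩

theorem E_mul_F_mul_G_mem_filtration : 𝐄 * 𝐅 * 𝐆 ∈ filtration k q 2 := by
  have hgen (i : Fin 7) : gen k q i ∈ filtration k q 1 := by
    simpa using mul_gen_mem_filtration i (one_mem_filtration (k := k) (q := q) 0)
  have hquad (i j : Fin 7) : gen k q i * gen k q j ∈ filtration k q 2 :=
    mul_gen_mem_filtration j (hgen i)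
  have hcentral {i j : Fin 7} (hi : 3 ≤ i) (hj : 3 ≤ j) :
      gen k q i * gen k q j ∈ filtration k q 1 :=
    mul_gen_mem_filtration_of_three_le hj (hgen i)
  rw [rel_EFG, Algebra.algebraMap_eq_smul_one]
  refine add_mem (sub_mem (add_mem (add_mem (add_mem (sub_mem (sub_mem (sub_mem
    (neg_mem (hquad 0 0)) (Submodule.smul_mem _ _ (hquad 1 1))) (hquad 2 2))
    (Submodule.smul_mem _ _ ?_)) ?_) (Submodule.smul_mem _ _ ?_)) ?_) ?_)
    (Submodule.smul_mem _ _ (one_mem_filtration 2))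
  · exact add_mem (add_mem (add_mem (hquad 3 3) (hquad 4 4)) (hquad 5 5)) (hquad 6 6)
  · exact mul_gen_mem_filtration 0
      (add_mem (hcentral (by decide) (by decide)) (hcentral (by decide) (by decide)))
  · exact mul_gen_mem_filtration 1
      (add_mem (hcentral (by decide) (by decide)) (hcentral (by decide) (by decide)))
  · exact mul_gen_mem_filtration 2
      (add_mem (hcentral (by decide) (by decide)) (hcentral (by decide) (by decide)))
  · exact mul_gen_mem_filtration_of_three_le (by decide) <|
      mul_gen_mem_filtration_of_three_le (by decide) (hquad 3 4)

theorem orderedMonomial_one_succ_one_mem_filtration (hq : q ≠ 0) (n : ℕ) :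
    orderedMonomial k q 1 (n + 1) 1 ∈ filtration k q (n + 2) := by
  induction n with
  | zero => simpa [orderedMonomial] using E_mul_F_mul_G_mem_filtration (k := k) (q := q)
  | succ n ih =>
    have hw := orderedMonomial_mem_filtration (k := k) (q := q) (le_refl (1 + (n + 1) + 0))
    rw [← orderedMonomial_mul_G, ← orderedMonomial_zero_mul_F, mul_assoc, rel_FG k q hq]
    simp only [mul_add, mul_sub, mul_smul_comm, ← mul_assoc]
    refine sub_mem (sub_mem (Submodule.smul_mem _ _ ?_) (Submodule.smul_mem _ _ ?_))
      (Submodule.smul_mem _ _ (add_mem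
        (orderedMonomial_mul_gen_mul_gen_mem (by decide) (by decide) (by omega))
        (orderedMonomial_mul_gen_mul_gen_mem (by decide) (by decide) (by omega))))
    · rw [orderedMonomial_mul_G]; exact mul_gen_mem_filtration 1 ih
    · exact filtration_mono (by omega) (mul_gen_mem_filtration 0 hw)

theorem orderedMonomial_succ_succ_succ_mem_filtration (hq : q ≠ 0) (m n l : ℕ) :
    orderedMonomial k q (m + 1) (n + 1) (l + 1) ∈ filtration k q (m + n + l + 2) := by
  induction m with
  | zero =>
    induction l with
    | zero => simpa using orderedMonomial_one_succ_one_mem_filtration hq n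
    | succ l ih =>
      rw [← orderedMonomial_mul_G]
      exact filtration_mono (by omega) (mul_G_mem_filtration ih)
  | succ m ih =>
    rw [← E_mul_orderedMonomial]
    exact filtration_mono (by omega) (E_mul_mem_filtration ih)

theorem filtration_le_span (hq : q ≠ 0) (d : ℕ) :
    filtration k q d ≤ Submodule.span k
      { w : RingQuot (BRel k q) | ∃ a b c d m n l : ℕ,
        (m = 0 ∨ n = 0 ∨ l = 0) ∧
        w = gen k q 3 ^ a * gen k q 4 ^ b * gen k q 5 ^ c * gen k q 6 ^ d *
          𝐄 ^ m * 𝐅 ^ n * 𝐆 ^ l } := by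
  induction d using Nat.strong_induction_on with
  | _ d ih =>
    refine Submodule.span_le.2 ?_
    rintro _ ⟨a, b, c, d', m, n, l, hd, rfl⟩
    by_cases h0 : m = 0 ∨ n = 0 ∨ l = 0
    · exact Submodule.subset_span ⟨a, b, c, d', m, n, l, h0,
        by simp only [centralMonomial, orderedMonomial, mul_assoc]⟩
    obtain ⟨m, rfl⟩ : ∃ m', m = m' + 1 := Nat.exists_eq_succ_of_ne_zero (by omega)
    obtain ⟨n, rfl⟩ : ∃ n', n = n' + 1 := Nat.exists_eq_succ_of_ne_zero (by omega)
    obtain ⟨l, rfl⟩ : ∃ l', l = l' + 1 := Nat.exists_eq_succ_of_ne_zero (by omega)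
    exact ih _ (by omega) (centralMonomial_mul_mem
      (orderedMonomial_succ_succ_succ_mem_filtration hq m n l) a b c d')

end BRel

theorem stmt_18_general (k : Type) [Field k] (q : k) (hq : q ≠ 0)
    (x : RingQuot (BRel k q)) :
    x ∈ Submodule.span k
      { w : RingQuot (BRel k q) | ∃ a b c d m n l : ℕ,
        (m = 0 ∨ n = 0 ∨ l = 0) ∧
        w = RingQuot.mkAlgHom k (BRel k q) (ι k 3) ^ a *
            RingQuot.mkAlgHom k (BRel k q) (ι k 4) ^ b *
            RingQuot.mkAlgHom k (BRel k q) (ι k 5) ^ c *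
            RingQuot.mkAlgHom k (BRel k q) (ι k 6) ^ d *
            RingQuot.mkAlgHom k (BRel k q) (ι k 0) ^ m *
            RingQuot.mkAlgHom k (BRel k q) (ι k 1) ^ n *
            RingQuot.mkAlgHom k (BRel k q) (ι k 2) ^ l } := by
  obtain ⟨d, hd⟩ := BRel.exists_mem_filtration x
  exact BRel.filtration_le_span hq d hd

/-- `B` is spanned, over the central subalgebra generated by `s, t, u, v`, by the
monomials `E^m F^n G^l` with at least one of `m, n, l` equal to zero: every
element is a `k`-linear combination of elements
`s^a t^b u^c v^d · E^m F^n G^l` with `m = 0` or `n = 0` or `l = 0`. -/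
theorem stmt_18 (k : Type) [Field k] (q : k) (hq : q ≠ 0) (hq4 : q ^ 4 ≠ 1)
    (x : RingQuot (BRel k q)) :
    x ∈ Submodule.span k
      { w : RingQuot (BRel k q) | ∃ a b c d m n l : ℕ,
        (m = 0 ∨ n = 0 ∨ l = 0) ∧
        w = RingQuot.mkAlgHom k (BRel k q) (ι k 3) ^ a *
            RingQuot.mkAlgHom k (BRel k q) (ι k 4) ^ b *
            RingQuot.mkAlgHom k (BRel k q) (ι k 5) ^ c *
            RingQuot.mkAlgHom k (BRel k q) (ι k 6) ^ d *
            RingQuot.mkAlgHom k (BRel k q) (ι k 0) ^ m *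
            RingQuot.mkAlgHom k (BRel k q) (ι k 1) ^ n *
            RingQuot.mkAlgHom k (BRel k q) (ι k 2) ^ l } :=
  stmt_18_general k q hq x
end
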